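/- Let σ₀ ∈ C¹(ℝⁿ;ℝⁿ), σ ∈ C¹(ℝⁿ;ℝ^{n×m}), u ∈ C²(ℝⁿ), a₁, a₂ ∈ B₁(0) ⊂ ℝᵐ, and x₀ ∈ ℝⁿ. For each t > 0 let x^t be the single-switch trajectory with data (σ₀ + σa₁, σ₀ + σa₂, t, x₀). Then as t → 0⁺: u(x^t(2t)) − u(x₀) = ∇u(x₀)·( 2σ₀(x₀) + σ(x₀)(a₁+a₂) ) t + K̃(x₀)(1,a₁,1,a₂)·(1,a₁,1,a₂) t²/2 + o(t²), where (1,a₁,1,a₂) ∈ ℝ^{2(m+1)} is the concatenation of (1,a₁) and (1,a₂). -/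

import Mathlib

open Set Filter Metric Matrix MeasureTheory Asymptotics
open scoped RealInnerProductSpace ENNReal Topology

noncomputable section

/-- Euclidean `n`-space. -/
abbrev Euc (n : ℕ) : Type := EuclideanSpace ℝ (Fin n)

/-- The Lie bracket `[f,g](x) = Dg(x) f(x) - Df(x) g(x)`. -/
def lieBracket {n : ℕ} (f g : Euc n → Euc n) (x : Euc n) : Euc n :=
  fderiv ℝ g x (f x) - fderiv ℝ f x (g x)

/-- Second-order Hamiltonian `H_{f,g} u (x) = ∇(∇u·g)(x) · f(x)`. -/
def H2 {n : ℕ} (f g : Euc n → Euc n) (u : Euc n → ℝ) (x : Euc n) : ℝ :=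
  fderiv ℝ (fun y => ⟪gradient u y, g y⟫) x (f x)

/-- Single-switch trajectory with data `(f, g, t, x₀)`: Carathéodory solution following `f`
on `[0,t)` and `g` on `[t,2t]`, starting at `x₀`. -/
def IsSwitchTraj {n : ℕ} (f g : Euc n → Euc n) (t : ℝ) (x₀ : Euc n) (x : ℝ → Euc n) : Prop :=
  x 0 = x₀ ∧ ContinuousOn x (Icc 0 (2 * t)) ∧
    (∀ s ∈ Ioo (0 : ℝ) t, HasDerivAt x (f (x s)) s) ∧
    (∀ s ∈ Ioo t (2 * t), HasDerivAt x (g (x s)) s)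

/-- Piecewise continuity: on every bounded interval, continuity off a finite set. -/
def PiecewiseContinuous {m : ℕ} (a : ℝ → Euc m) : Prop :=
  ∀ T > (0 : ℝ), ∃ D : Finset ℝ, ∀ t ∈ Icc (0 : ℝ) T, t ∉ D → ContinuousAt a t

/-- Admissible control with values in the control set `A`. -/
def IsControl {m : ℕ} (A : Set (Euc m)) (a : ℝ → Euc m) : Prop :=
  (∀ s, a s ∈ A) ∧ PiecewiseContinuous a

/-- Carathéodory trajectory of the control system `ẋ = f(x,a)`. -/
def IsTraj {n m : ℕ} (f : Euc n → Euc m → Euc n) (A : Set (Euc m))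
    (a : ℝ → Euc m) (x : ℝ → Euc n) : Prop :=
  IsControl A a ∧ ContinuousOn x (Ici 0) ∧
    ∀ t : ℝ, 0 ≤ t → x t = x 0 + ∫ s in (0 : ℝ)..t, f (x s) (a s)

/-- Points from which the target `𝒯` can be reached within time `t`. -/
def ReachSet {n m : ℕ} (f : Euc n → Euc m → Euc n) (A : Set (Euc m)) (𝒯 : Set (Euc n))
    (t : ℝ) : Set (Euc n) :=
  {x₀ | ∃ (a : ℝ → Euc m) (x : ℝ → Euc n) (t' : ℝ),
    IsTraj f A a x ∧ x 0 = x₀ ∧ 0 ≤ t' ∧ t' ≤ t ∧ x t' ∈ 𝒯}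

/-- Minimum time function, valued in `ℝ≥0∞`. -/
def minTime {n m : ℕ} (f : Euc n → Euc m → Euc n) (A : Set (Euc m)) (𝒯 : Set (Euc n))
    (x₀ : Euc n) : ℝ≥0∞ :=
  sInf {θ : ℝ≥0∞ | ∃ (a : ℝ → Euc m) (x : ℝ → Euc n) (t : ℝ),
    IsTraj f A a x ∧ x 0 = x₀ ∧ 0 ≤ t ∧ x t ∈ 𝒯 ∧ θ = ENNReal.ofReal t}

/-- Small time local attainability of the target `𝒯` at `xbar`. -/
def STLA {n m : ℕ} (f : Euc n → Euc m → Euc n) (A : Set (Euc m)) (𝒯 : Set (Euc n))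
    (xbar : Euc n) : Prop :=
  ∀ t > (0 : ℝ), xbar ∈ interior (ReachSet f A 𝒯 t)

/-- `C^k` controlled vector field: `C^k` in `x` with spatial derivatives jointly continuous. -/
def VFieldC {n m : ℕ} (k : ℕ) (f : Euc n → Euc m → Euc n) : Prop :=
  (∀ a, ContDiff ℝ k fun x => f x a) ∧
    ∀ i ≤ k, Continuous fun p : Euc n × Euc m => iteratedFDeriv ℝ i (fun x => f x p.2) p.1

/-- The second-order controllability expression
`-D²u(x) f(x,a₁)·f(x,a₂) - (D(f(·,a₁)+f(·,a₂))(x)(f(x,a₁)+f(x,a₂)) + [f(·,a₁),f(·,a₂)](x))·∇u(x)`. -/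
def SOexpr {n m : ℕ} (f : Euc n → Euc m → Euc n) (u : Euc n → ℝ) (x : Euc n)
    (a₁ a₂ : Euc m) : ℝ :=
  -⟪fderiv ℝ (gradient u) x (f x a₁), f x a₂⟫ -
    ⟪gradient u x,
      fderiv ℝ (fun y => f y a₁ + f y a₂) x (f x a₁ + f x a₂) +
        lieBracket (fun y => f y a₁) (fun y => f y a₂) x⟫

/-- The target is reached with a piecewise constant control with at most one switch. -/
def ReachOneSwitch {n m : ℕ} (f : Euc n → Euc m → Euc n) (A : Set (Euc m)) (𝒯 : Set (Euc n))
    (x₀ : Euc n) : Prop :=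
  ∃ a₁ ∈ A, ∃ a₂ ∈ A, ∃ ts tf : ℝ, 0 ≤ ts ∧ ts ≤ tf ∧
    ∃ x : ℝ → Euc n, IsTraj f A (fun s => if s < ts then a₁ else a₂) x ∧ x 0 = x₀ ∧ x tf ∈ 𝒯

/-- The matrix `S(x) = D(∇u σ)(x) σ(x)`, i.e. `S_{ij}(x) = ∇(∇u·σᵢ)(x)·σⱼ(x)`. -/
def Smat {n m : ℕ} (σ : Fin m → Euc n → Euc n) (u : Euc n → ℝ) (x : Euc n) :
    Matrix (Fin m) (Fin m) ℝ :=
  Matrix.of fun i j => fderiv ℝ (fun y => ⟪gradient u y, σ i y⟫) x (σ j x)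

/-- The symmetric block matrix `K = [[S*, ᵗS],[S, S*]]` built from a square matrix `S`. -/
def Kof {m : ℕ} (S : Matrix (Fin m) (Fin m) ℝ) :
    Matrix (Fin m ⊕ Fin m) (Fin m ⊕ Fin m) ℝ :=
  Matrix.fromBlocks ((2 : ℝ)⁻¹ • (S + Sᵀ)) Sᵀ S ((2 : ℝ)⁻¹ • (S + Sᵀ))

/-- The matrix `K(x)` associated to `σ` and `u`. -/
def Kmat {n m : ℕ} (σ : Fin m → Euc n → Euc n) (u : Euc n → ℝ) (x : Euc n) :
    Matrix (Fin m ⊕ Fin m) (Fin m ⊕ Fin m) ℝ :=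
  Kof (Smat σ u x)

/-- Symmetric system vector field `f(x,a) = σ(x) a`. -/
def symF {n m : ℕ} (σ : Fin m → Euc n → Euc n) : Euc n → Euc m → Euc n :=
  fun x a => ∑ j, a j • σ j x

/-- Nonlinear affine system vector field `f(x,a) = σ₀(x) + σ(x) a`. -/
def affF {n m : ℕ} (σ₀ : Euc n → Euc n) (σ : Fin m → Euc n → Euc n) :
    Euc n → Euc m → Euc n :=
  fun x a => σ₀ x + ∑ j, a j • σ j x

end

/-!
Along an arc of `ẋ = f(x)` the chain rule gives `d/ds u(x) = ∇u·f` and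
`d/ds (∇u·g)(x) = H_{f,g}u(x)`. A first-exit-time argument keeps the switch trajectory within
`O(t)` of `x₀`, so on `[0, 2t]` these second derivatives are uniformly close to their values at
`x₀`, and the mean value theorem yields second-order Taylor expansions of `u` on both arcs. The
second arc starts at `x^t(t)` rather than `x₀`; a first-order expansion of `∇u·f₂` on the first
arc moves its linear term back to `x₀` and produces the cross term `2 H_{f₁,f₂}u(x₀)`. Finally
`H_{f,g}u(x)` is bilinear in fields `f = σ̃ p`, `g = σ̃ q`, with matrix `S̃(x)`, which turns
`H_{f₁,f₁} + 2 H_{f₁,f₂} + H_{f₂,f₂}` into the quadratic form of `K̃(x₀)` at `(1,a₁,1,a₂)`.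
-/

theorem norm_sub_le_of_hasDerivAt_Ioo {E : Type*} [NormedAddCommGroup E] [NormedSpace ℝ E]
    {y v : ℝ → E} {a b M : ℝ} (hab : a ≤ b) (hy : ContinuousOn y (Icc a b))
    (hd : ∀ s ∈ Ioo a b, HasDerivAt y (v s) s) (hv : ∀ s ∈ Ioo a b, ‖v s‖ ≤ M) :
    ‖y b - y a‖ ≤ M * (b - a) := by
  rcases hab.eq_or_lt with rfl | hlt
  · simp
  -- Mathlib's version needs a right derivative at `a`: apply it on `[a', b]` and let `a' → a⁺`.
  have hinner : ∀ a' ∈ Ioo a b, ‖y b - y a'‖ ≤ M * (b - a') := fun a' ha' =>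
    norm_image_sub_le_of_norm_deriv_right_le_segment (hy.mono (Icc_subset_Icc_left ha'.1.le))
      (fun s hs => (hd s ⟨ha'.1.trans_le hs.1, hs.2⟩).hasDerivWithinAt)
      (fun s hs => hv s ⟨ha'.1.trans_le hs.1, hs.2⟩) b ⟨ha'.2.le, le_rfl⟩
  have hya : Tendsto y (𝓝[>] a) (𝓝 (y a)) :=
    (hy a (left_mem_Icc.2 hab)).mono_left (nhdsWithin_mono _ Ioo_subset_Icc_self |>.trans'
      (le_of_eq (nhdsWithin_Ioo_eq_nhdsGT hlt).symm))
  have hlim : Tendsto (fun a' => M * (b - a') - ‖y b - y a'‖) (𝓝[>] a)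
      (𝓝 (M * (b - a) - ‖y b - y a‖)) :=
    ((tendsto_nhdsWithin_of_tendsto_nhds tendsto_id).const_sub b |>.const_mul M).sub
      (tendsto_const_nhds.sub hya).norm
  refine sub_nonneg.1 (ge_of_tendsto hlim ?_)
  filter_upwards [Ioo_mem_nhdsGT hlt] with a' ha' using sub_nonneg.2 (hinner a' ha')

theorem abs_sub_sub_le_of_hasDerivAt_Ioo {h k : ℝ → ℝ} {a b c ε : ℝ} (hab : a ≤ b)
    (hh : ContinuousOn h (Icc a b)) (hd : ∀ s ∈ Ioo a b, HasDerivAt h (k s) s)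
    (hk : ∀ s ∈ Ioo a b, |k s - c| ≤ ε) : |h b - h a - (b - a) * c| ≤ ε * (b - a) := by
  have := norm_sub_le_of_hasDerivAt_Ioo (y := fun s => h s - s * c) hab
    (hh.sub (continuousOn_id.mul continuousOn_const))
    (fun s hs => (hd s hs).sub (hasDerivAt_mul_const c)) hk
  rw [Real.norm_eq_abs] at this
  convert this using 2
  ring

theorem abs_sub_sub_sub_le_of_hasDerivAt_Ioo {g h k : ℝ → ℝ} {a b c ε : ℝ} (hab : a ≤ b)
    (hg : ContinuousOn g (Icc a b)) (hh : ContinuousOn h (Icc a b))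
    (hgd : ∀ s ∈ Ioo a b, HasDerivAt g (h s) s) (hhd : ∀ s ∈ Ioo a b, HasDerivAt h (k s) s)
    (hk : ∀ s ∈ Ioo a b, |k s - c| ≤ ε) :
    |g b - g a - (b - a) * h a - (b - a) ^ 2 / 2 * c| ≤ ε * (b - a) ^ 2 := by
  have hpoly : ∀ s, HasDerivAt (fun s => (s - a) * h a + (s - a) ^ 2 / 2 * c)
      (h a + (s - a) * c) s := fun s => by
    refine ((((hasDerivAt_id s).sub_const a).mul_const (h a)).add
      (((((hasDerivAt_id s).sub_const a).pow 2).div_const 2).mul_const c)).congr_deriv ?_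
    simp only [id_eq]; ring
  rcases hab.eq_or_lt with rfl | hlt
  · simp
  obtain ⟨s₀, hs₀⟩ := exists_between hlt
  have hε : 0 ≤ ε := (abs_nonneg _).trans (hk s₀ hs₀)
  have := norm_sub_le_of_hasDerivAt_Ioo
    (y := fun s => g s - ((s - a) * h a + (s - a) ^ 2 / 2 * c)) (M := ε * (b - a)) hab
    (hg.sub (by fun_prop)) (fun s hs => (hgd s hs).sub (hpoly s)) (fun s hs => by
      have := abs_sub_sub_le_of_hasDerivAt_Ioo hs.1.le (hh.mono (Icc_subset_Icc_right hs.2.le))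
        (fun r hr => hhd r ⟨hr.1, hr.2.trans hs.2⟩) (fun r hr => hk r ⟨hr.1, hr.2.trans hs.2⟩)
      rw [Real.norm_eq_abs]
      calc |h s - (h a + (s - a) * c)| = |h s - h a - (s - a) * c| := by ring_nf
        _ ≤ ε * (s - a) := this
        _ ≤ ε * (b - a) := by gcongr; exact hs.2.le)
  rw [Real.norm_eq_abs] at this
  convert this using 1
  · congr 1; ring
  · ring

theorem norm_sub_le_of_hasDerivAt_of_norm_le_on_ball {E : Type*} [NormedAddCommGroup E]
    [NormedSpace ℝ E] {f : E → E} {x : ℝ → E} {c : E} {a b R M : ℝ} (hM : 0 ≤ M)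
    (hx : ContinuousOn x (Icc a b)) (hd : ∀ s ∈ Ioo a b, HasDerivAt x (f (x s)) s)
    (hf : ∀ y ∈ ball c R, ‖f y‖ ≤ M) (hR : dist (x a) c + M * (b - a) < R) :
    ∀ s ∈ Icc a b, ‖x s - x a‖ ≤ M * (s - a) := by
  have hbound : ∀ s ∈ Icc a b, (∀ r ∈ Ioo a s, x r ∈ ball c R) → ‖x s - x a‖ ≤ M * (s - a) :=
    fun s hs hin => norm_sub_le_of_hasDerivAt_Ioo hs.1 (hx.mono (Icc_subset_Icc_right hs.2))
      (fun r hr => hd r ⟨hr.1, hr.2.trans_le hs.2⟩) (fun r hr => hf _ (hin r hr))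
  suffices hin : ∀ s ∈ Icc a b, x s ∈ ball c R from fun s hs =>
    hbound s hs fun r hr => hin r ⟨hr.1.le, hr.2.le.trans hs.2⟩
  by_contra! ⟨s, hs, hxs⟩
  -- `τ` is the first exit time from the ball
  obtain ⟨τ, ⟨hτ, hτout⟩, hτmin⟩ := (isCompact_Icc.of_isClosed_subset
    (hx.preimage_isClosed_of_isClosed isClosed_Icc isOpen_ball.isClosed_compl)
    inter_subset_left).exists_isLeast ⟨s, hs, hxs⟩
  have hτa := hbound τ hτ fun r hr => by_contra fun h =>
    (hτmin ⟨⟨hr.1.le, hr.2.le.trans hτ.2⟩, h⟩).not_gt hr.2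
  refine hτout (mem_ball.2 ?_)
  calc dist (x τ) c ≤ dist (x τ) (x a) + dist (x a) c := dist_triangle _ _ _
    _ ≤ M * (b - a) + dist (x a) c := by
      rw [dist_eq_norm]; gcongr; exact hτa.trans (by gcongr; exact hτ.2)
    _ < R := by linarith

theorem IsSwitchTraj.eventually_dist_lt {n : ℕ} {f g : Euc n → Euc n} {x₀ : Euc n}
    {X : ℝ → ℝ → Euc n} (hf : ContinuousAt f x₀) (hg : ContinuousAt g x₀)
    (hX : ∀ t > (0 : ℝ), IsSwitchTraj f g t x₀ (X t)) {δ : ℝ} (hδ : 0 < δ) :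
    ∀ᶠ t in 𝓝[>] 0, ∀ s ∈ Icc 0 (2 * t), dist (X t s) x₀ < δ := by
  set M := ‖f x₀‖ + ‖g x₀‖ + 1
  have hM : 0 < M := by positivity
  obtain ⟨R, hR, hball⟩ := Metric.eventually_nhds_iff_ball.1
    ((hf.norm.eventually (gt_mem_nhds (lt_add_one ‖f x₀‖))).and
      (hg.norm.eventually (gt_mem_nhds (lt_add_one ‖g x₀‖))))
  have hfgM : ∀ y ∈ ball x₀ (min R δ), ‖f y‖ ≤ M ∧ ‖g y‖ ≤ M := fun y hy => by
    have := hball y (ball_subset_ball (min_le_left _ _) hy)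
    constructor <;> linarith [this.1, this.2, norm_nonneg (f x₀), norm_nonneg (g x₀)]
  have hsmall : ∀ᶠ t in 𝓝[>] (0 : ℝ), 0 < t ∧ 2 * M * t < min R δ :=
    eventually_mem_nhdsWithin.and <| nhdsWithin_le_nhds <|
      (continuous_const.mul continuous_id).tendsto' 0 0 (by simp) |>.eventually
        (gt_mem_nhds (lt_min hR hδ))
  filter_upwards [hsmall] with t ⟨ht, htR⟩
  obtain ⟨hx0, hxc, hd₁, hd₂⟩ := hX t ht
  have arc₁ := norm_sub_le_of_hasDerivAt_of_norm_le_on_ball hM.le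
    (hxc.mono (Icc_subset_Icc_right (by linarith))) hd₁ (fun y hy => (hfgM y hy).1)
    (by rw [hx0, dist_self]; nlinarith)
  have arc₂ := norm_sub_le_of_hasDerivAt_of_norm_le_on_ball hM.le
    (hxc.mono (Icc_subset_Icc_left ht.le)) hd₂ (fun y hy => (hfgM y hy).2) (by
      have := arc₁ t ⟨ht.le, le_rfl⟩
      rw [hx0] at this
      rw [dist_eq_norm]; linarith)
  intro s hs
  refine lt_of_le_of_lt ?_ (htR.trans_le (min_le_right _ _))
  rw [dist_eq_norm, ← hx0]
  rcases le_total s t with hst | hts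
  · calc ‖X t s - X t 0‖ ≤ M * (s - 0) := arc₁ s ⟨hs.1, hst⟩
      _ ≤ 2 * M * t := by nlinarith
  · calc ‖X t s - X t 0‖ ≤ ‖X t s - X t t‖ + ‖X t t - X t 0‖ :=
          norm_sub_le_norm_sub_add_norm_sub _ _ _
      _ ≤ M * (s - t) + M * (t - 0) := add_le_add (arc₂ s ⟨hts, hs.2⟩) (arc₁ t ⟨ht.le, le_rfl⟩)
      _ ≤ 2 * M * t := by nlinarith [hs.2]

section Expansion

variable {n : ℕ} {u : Euc n → ℝ}

theorem contDiff_inner_gradient (hu : ContDiff ℝ 2 u) {g : Euc n → Euc n}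
    (hg : ContDiff ℝ 1 g) : ContDiff ℝ 1 fun y => ⟪gradient u y, g y⟫ := by
  simp only [inner_gradient_left]
  exact (hu.fderiv_right (by norm_num)).clm_apply hg

theorem continuous_H2 (hu : ContDiff ℝ 2 u) {f g : Euc n → Euc n} (hf : Continuous f)
    (hg : ContDiff ℝ 1 g) : Continuous (H2 f g u) :=
  ((contDiff_inner_gradient hu hg).continuous_fderiv one_ne_zero).clm_apply hf

theorem HasDerivAt.comp_gradient (hu : Differentiable ℝ u) {f : Euc n → Euc n}
    {x : ℝ → Euc n} {s : ℝ} (hx : HasDerivAt x (f (x s)) s) :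
    HasDerivAt (fun r => u (x r)) ⟪gradient u (x s), f (x s)⟫ s := by
  rw [inner_gradient_left]
  exact (hu (x s)).hasFDerivAt.comp_hasDerivAt s hx

theorem HasDerivAt.comp_inner_gradient (hu : ContDiff ℝ 2 u) {f g : Euc n → Euc n}
    (hg : ContDiff ℝ 1 g) {x : ℝ → Euc n} {s : ℝ} (hx : HasDerivAt x (f (x s)) s) :
    HasDerivAt (fun r => ⟪gradient u (x r), g (x r)⟫) (H2 f g u (x s)) s :=
  ((contDiff_inner_gradient hu hg).differentiable one_ne_zero (x s)).hasFDerivAt.comp_hasDerivAt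
    s hx

variable {f g : Euc n → Euc n} {x : ℝ → Euc n} {a b c ε : ℝ}

theorem abs_inner_gradient_sub_sub_le_of_hasDerivAt (hu : ContDiff ℝ 2 u) (hg : ContDiff ℝ 1 g)
    (hab : a ≤ b) (hx : ContinuousOn x (Icc a b)) (hd : ∀ s ∈ Ioo a b, HasDerivAt x (f (x s)) s)
    (hH : ∀ s ∈ Ioo a b, |H2 f g u (x s) - c| ≤ ε) :
    |⟪gradient u (x b), g (x b)⟫ - ⟪gradient u (x a), g (x a)⟫ - (b - a) * c| ≤ ε * (b - a) :=
  abs_sub_sub_le_of_hasDerivAt_Ioo hab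
    ((contDiff_inner_gradient hu hg).continuous.comp_continuousOn hx)
    (fun s hs => (hd s hs).comp_inner_gradient hu hg) hH

theorem abs_sub_sub_sub_le_of_hasDerivAt_of_H2 (hu : ContDiff ℝ 2 u) (hf : ContDiff ℝ 1 f)
    (hab : a ≤ b) (hx : ContinuousOn x (Icc a b)) (hd : ∀ s ∈ Ioo a b, HasDerivAt x (f (x s)) s)
    (hH : ∀ s ∈ Ioo a b, |H2 f f u (x s) - c| ≤ ε) :
    |u (x b) - u (x a) - (b - a) * ⟪gradient u (x a), f (x a)⟫ - (b - a) ^ 2 / 2 * c|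
      ≤ ε * (b - a) ^ 2 :=
  abs_sub_sub_sub_le_of_hasDerivAt_Ioo hab (hu.continuous.comp_continuousOn hx)
    ((contDiff_inner_gradient hu hf).continuous.comp_continuousOn hx)
    (fun s hs => (hd s hs).comp_gradient (hu.differentiable (by norm_num)))
    (fun s hs => (hd s hs).comp_inner_gradient hu hf) hH

end Expansion

theorem IsSwitchTraj.isLittleO_sq {n : ℕ} {f₁ f₂ : Euc n → Euc n} {u : Euc n → ℝ} {x₀ : Euc n}
    {X : ℝ → ℝ → Euc n} (hf₁ : ContDiff ℝ 1 f₁) (hf₂ : ContDiff ℝ 1 f₂) (hu : ContDiff ℝ 2 u)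
    (hX : ∀ t > (0 : ℝ), IsSwitchTraj f₁ f₂ t x₀ (X t)) :
    (fun t : ℝ => u (X t (2 * t)) - u x₀ - t * ⟪gradient u x₀, f₁ x₀ + f₂ x₀⟫ -
        t ^ 2 / 2 * (H2 f₁ f₁ u x₀ + 2 * H2 f₁ f₂ u x₀ + H2 f₂ f₂ u x₀))
      =o[𝓝[>] 0] fun t => t ^ 2 := by
  rw [isLittleO_iff]
  intro C hC
  set ε := C / 3
  have hnear : ∀ {f g : Euc n → Euc n}, Continuous f → ContDiff ℝ 1 g →
      ∀ᶠ y in 𝓝 x₀, |H2 f g u y - H2 f g u x₀| ≤ ε := fun hf hg =>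
    ((continuous_H2 hu hf hg).continuousAt.eventually
      (closedBall_mem_nhds _ (by positivity : 0 < ε))).mono fun y hy => by
        rwa [Real.dist_eq] at hy
  obtain ⟨δ, hδ, hball⟩ := Metric.eventually_nhds_iff_ball.1
    ((hnear hf₁.continuous hf₁).and ((hnear hf₁.continuous hf₂).and (hnear hf₂.continuous hf₂)))
  filter_upwards [IsSwitchTraj.eventually_dist_lt hf₁.continuous.continuousAt
    hf₂.continuous.continuousAt hX hδ, eventually_mem_nhdsWithin] with t hclose (ht : 0 < t)
  obtain ⟨hx0, hxc, hd₁, hd₂⟩ := hX t ht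
  have hH : ∀ s ∈ Ioo 0 (2 * t), _ := fun s hs => hball _ (hclose s (Ioo_subset_Icc_self hs))
  have ht2 : t ≤ 2 * t := by linarith
  have arc₁ := abs_sub_sub_sub_le_of_hasDerivAt_of_H2 hu hf₁ ht.le
    (hxc.mono (Icc_subset_Icc_right ht2)) hd₁ fun s hs => (hH s ⟨hs.1, hs.2.trans_le ht2⟩).1
  have arc₁' := abs_inner_gradient_sub_sub_le_of_hasDerivAt hu hf₂ ht.le
    (hxc.mono (Icc_subset_Icc_right ht2)) hd₁ fun s hs => (hH s ⟨hs.1, hs.2.trans_le ht2⟩).2.1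
  have arc₂ := abs_sub_sub_sub_le_of_hasDerivAt_of_H2 hu hf₂ ht2
    (hxc.mono (Icc_subset_Icc_left ht.le)) hd₂ fun s hs => (hH s ⟨ht.trans hs.1, hs.2⟩).2.2
  rw [hx0, sub_zero] at arc₁ arc₁'
  rw [show 2 * t - t = t by ring] at arc₂
  rw [Real.norm_eq_abs, norm_pow, Real.norm_eq_abs, sq_abs, inner_add_right]
  calc _ = |(u (X t t) - u x₀ - t * ⟪gradient u x₀, f₁ x₀⟫ - t ^ 2 / 2 * H2 f₁ f₁ u x₀) +
          (u (X t (2 * t)) - u (X t t) - t * ⟪gradient u (X t t), f₂ (X t t)⟫ -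
            t ^ 2 / 2 * H2 f₂ f₂ u x₀) +
          t * (⟪gradient u (X t t), f₂ (X t t)⟫ - ⟪gradient u x₀, f₂ x₀⟫ - t * H2 f₁ f₂ u x₀)| := by
        congr 1; ring
    _ ≤ ε * t ^ 2 + ε * t ^ 2 + t * (ε * t) := by
        refine (abs_add_three _ _ _).trans ?_
        rw [abs_mul, abs_of_pos ht]
        gcongr
    _ = C * t ^ 2 := by ring

theorem Kof_mulVec_sumElim_dotProduct {k : ℕ} (S : Matrix (Fin k) (Fin k) ℝ) (p q : Fin k → ℝ) :
    Kof S *ᵥ Sum.elim p q ⬝ᵥ Sum.elim p q = S *ᵥ p ⬝ᵥ p + 2 * (S *ᵥ p ⬝ᵥ q) + S *ᵥ q ⬝ᵥ q := by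
  have hT : ∀ v w, Sᵀ *ᵥ v ⬝ᵥ w = S *ᵥ w ⬝ᵥ v := fun v w => by
    rw [mulVec_transpose, ← dotProduct_mulVec, dotProduct_comm]
  simp only [Kof, fromBlocks_mulVec, Sum.elim_comp_inl, Sum.elim_comp_inr,
    sumElim_dotProduct_sumElim, add_dotProduct, add_mulVec, smul_mulVec, smul_dotProduct, hT,
    smul_eq_mul]
  ring

theorem Smat_mulVec_dotProduct {n k : ℕ} {σ : Fin k → Euc n → Euc n} {u : Euc n → ℝ} {x : Euc n}
    (hσ : ∀ i, DifferentiableAt ℝ (fun y => ⟪gradient u y, σ i y⟫) x) (p q : Fin k → ℝ) :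
    Smat σ u x *ᵥ p ⬝ᵥ q = H2 (fun y => ∑ j, p j • σ j y) (fun y => ∑ i, q i • σ i y) u x := by
  have hsum : (fun y => ⟪gradient u y, ∑ i, q i • σ i y⟫) =
      fun y => ∑ i, q i * ⟪gradient u y, σ i y⟫ := by
    funext y; simp only [inner_sum, inner_smul_right]
  rw [H2, hsum, (HasFDerivAt.fun_sum fun i _ => (hσ i).hasFDerivAt.const_mul (q i)).fderiv]
  simp only [Smat, mulVec, dotProduct, of_apply, FunLike.coe_sum, Finset.sum_apply,
    FunLike.coe_smul, Pi.smul_apply, map_sum, map_smul, smul_eq_mul, Finset.mul_sum,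
    Finset.sum_mul]
  rw [Finset.sum_comm]
  exact Finset.sum_congr rfl fun i _ => Finset.sum_congr rfl fun j _ => by ring

theorem statement16_general {n m : ℕ} (σ₀ : Euc n → Euc n) (hσ₀ : ContDiff ℝ 1 σ₀)
    (σ : Fin m → Euc n → Euc n) (hσ : ∀ j, ContDiff ℝ 1 (σ j))
    (u : Euc n → ℝ) (hu : ContDiff ℝ 2 u)
    (a₁ a₂ : Euc m) (x₀ : Euc n)
    (X : ℝ → ℝ → Euc n)
    (hX : ∀ t > (0 : ℝ),
      IsSwitchTraj (fun y => σ₀ y + ∑ j, a₁ j • σ j y)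
        (fun y => σ₀ y + ∑ j, a₂ j • σ j y) t x₀ (X t)) :
    (fun t : ℝ => u (X t (2 * t)) - u x₀ -
        t * ⟪gradient u x₀, (2 : ℝ) • σ₀ x₀ + ∑ j, (a₁ j + a₂ j) • σ j x₀⟫ -
        t ^ 2 / 2 * (Kmat (Fin.cons σ₀ σ) u x₀ *ᵥ
            Sum.elim (Fin.cons 1 fun i => a₁ i) (Fin.cons 1 fun i => a₂ i) ⬝ᵥ
          Sum.elim (Fin.cons 1 fun i => a₁ i) (Fin.cons 1 fun i => a₂ i)))
      =o[𝓝[>] (0 : ℝ)] fun t => t ^ 2 := by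
  have hfield : ∀ a : Euc m, (fun y => σ₀ y + ∑ j, a j • σ j y) = fun y =>
      ∑ i, (Fin.cons 1 fun i => a i : Fin (m + 1) → ℝ) i • (Fin.cons σ₀ σ : Fin (m + 1) → _) i y :=
    fun a => funext fun y => by simp [Fin.sum_univ_succ]
  have hcontDiff : ∀ a : Euc m, ContDiff ℝ 1 fun y => σ₀ y + ∑ j, a j • σ j y := fun a =>
    hσ₀.add (ContDiff.sum fun j _ => (hσ j).const_smul (a j))
  have hσ' : ∀ i, ContDiff ℝ 1 ((Fin.cons σ₀ σ : Fin (m + 1) → Euc n → Euc n) i) :=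
    Fin.cases hσ₀ hσ
  have hψ : ∀ i, DifferentiableAt ℝ
      (fun y => ⟪gradient u y, (Fin.cons σ₀ σ : Fin (m + 1) → Euc n → Euc n) i y⟫) x₀ := fun i =>
    (contDiff_inner_gradient hu (hσ' i)).differentiable one_ne_zero x₀
  have hlinear : (2 : ℝ) • σ₀ x₀ + ∑ j, (a₁ j + a₂ j) • σ j x₀ =
      (σ₀ x₀ + ∑ j, a₁ j • σ j x₀) + (σ₀ x₀ + ∑ j, a₂ j • σ j x₀) := by
    simp only [two_smul, add_smul, Finset.sum_add_distrib]; abel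
  rw [hlinear, Kmat, Kof_mulVec_sumElim_dotProduct, Smat_mulVec_dotProduct hψ,
    Smat_mulVec_dotProduct hψ, Smat_mulVec_dotProduct hψ, ← hfield a₁, ← hfield a₂]
  exact (IsSwitchTraj.isLittleO_sq (hcontDiff a₁) (hcontDiff a₂) hu hX :)

/-- Proposition 5.1: expansion of `u` along a single-switch trajectory of a
nonlinear affine system, via the quadratic form of the extended matrix `K̃(x₀)` evaluated at the
concatenated vector `(1,a₁,1,a₂)`. -/
theorem statement16 {n m : ℕ} (σ₀ : Euc n → Euc n) (hσ₀ : ContDiff ℝ 1 σ₀)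
    (σ : Fin m → Euc n → Euc n) (hσ : ∀ j, ContDiff ℝ 1 (σ j))
    (u : Euc n → ℝ) (hu : ContDiff ℝ 2 u)
    (a₁ a₂ : Euc m) (ha₁ : ‖a₁‖ ≤ 1) (ha₂ : ‖a₂‖ ≤ 1) (x₀ : Euc n)
    (X : ℝ → ℝ → Euc n)
    (hX : ∀ t > (0 : ℝ),
      IsSwitchTraj (fun y => σ₀ y + ∑ j, a₁ j • σ j y)
        (fun y => σ₀ y + ∑ j, a₂ j • σ j y) t x₀ (X t)) :
    (fun t : ℝ => u (X t (2 * t)) - u x₀ -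
        t * ⟪gradient u x₀, (2 : ℝ) • σ₀ x₀ + ∑ j, (a₁ j + a₂ j) • σ j x₀⟫ -
        t ^ 2 / 2 * (Kmat (Fin.cons σ₀ σ) u x₀ *ᵥ
            Sum.elim (Fin.cons 1 fun i => a₁ i) (Fin.cons 1 fun i => a₂ i) ⬝ᵥ
          Sum.elim (Fin.cons 1 fun i => a₁ i) (Fin.cons 1 fun i => a₂ i)))
      =o[𝓝[>] (0 : ℝ)] fun t => t ^ 2 :=
  statement16_general σ₀ hσ₀ σ hσ u hu a₁ a₂ x₀ X hX
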